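/- Let q, q', ℓ be nonzero complex numbers with conj(q) = q'⁻¹ and conj(ℓ) = ℓ. Then there exists a unique star structure ★ₗ on the q-linked quantum group algebra A_{q,q',ℓ} with a^{★ₗ} = d', b^{★ₗ} = −q'c', c^{★ₗ} = −q'⁻¹b', d^{★ₗ} = a', a'^{★ₗ} = d, b'^{★ₗ} = −q⁻¹c, c'^{★ₗ} = −qb, d'^{★ₗ} = a, and it is a Hopf star structure: Δ(x^{★ₗ}) = (★ₗ ⊗ ★ₗ)(Δ(x)) for all x, where Δ is the matrix comultiplication on each sector. (The fixed-point real form is the deformed real Lorentz group SO_{q,q'}^{ℓ}(3,1).) -/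
import Mathlib


noncomputable section

open FreeAlgebra
open scoped TensorProduct

/-- The relations of the q-linked quantum group algebra `A_{q,q',ℓ}` with generators
`a, b, c, d` (indices 0–3) and `a', b', c', d'` (indices 4–7). -/
inductive ALinkRel (q q' ℓ : ℂ) :
    FreeAlgebra ℂ (Fin 8) → FreeAlgebra ℂ (Fin 8) → Prop
  | ab : ALinkRel q q' ℓ (ι ℂ 0 * ι ℂ 1) (q⁻¹ • (ι ℂ 1 * ι ℂ 0))
  | ac : ALinkRel q q' ℓ (ι ℂ 0 * ι ℂ 2) (q⁻¹ • (ι ℂ 2 * ι ℂ 0))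
  | bd : ALinkRel q q' ℓ (ι ℂ 1 * ι ℂ 3) (q⁻¹ • (ι ℂ 3 * ι ℂ 1))
  | cd : ALinkRel q q' ℓ (ι ℂ 2 * ι ℂ 3) (q⁻¹ • (ι ℂ 3 * ι ℂ 2))
  | bc : ALinkRel q q' ℓ (ι ℂ 1 * ι ℂ 2) (ι ℂ 2 * ι ℂ 1)
  | ad : ALinkRel q q' ℓ (ι ℂ 0 * ι ℂ 3 - ι ℂ 3 * ι ℂ 0) ((q⁻¹ - q) • (ι ℂ 1 * ι ℂ 2))
  | ab' : ALinkRel q q' ℓ (ι ℂ 4 * ι ℂ 5) (q' • (ι ℂ 5 * ι ℂ 4))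
  | ac' : ALinkRel q q' ℓ (ι ℂ 4 * ι ℂ 6) (q' • (ι ℂ 6 * ι ℂ 4))
  | bd' : ALinkRel q q' ℓ (ι ℂ 5 * ι ℂ 7) (q' • (ι ℂ 7 * ι ℂ 5))
  | cd' : ALinkRel q q' ℓ (ι ℂ 6 * ι ℂ 7) (q' • (ι ℂ 7 * ι ℂ 6))
  | bc' : ALinkRel q q' ℓ (ι ℂ 5 * ι ℂ 6) (ι ℂ 6 * ι ℂ 5)
  | ad' : ALinkRel q q' ℓ (ι ℂ 4 * ι ℂ 7 - ι ℂ 7 * ι ℂ 4) ((q' - q'⁻¹) • (ι ℂ 5 * ι ℂ 6))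
  | link₁ : ALinkRel q q' ℓ (ι ℂ 5 * ι ℂ 0) (ℓ • (ι ℂ 0 * ι ℂ 5))
  | link₂ : ALinkRel q q' ℓ (ι ℂ 0 * ι ℂ 6) (ℓ • (ι ℂ 6 * ι ℂ 0))
  | link₃ : ALinkRel q q' ℓ (ι ℂ 4 * ι ℂ 1) (ℓ • (ι ℂ 1 * ι ℂ 4))
  | link₄ : ALinkRel q q' ℓ (ι ℂ 1 * ι ℂ 7) (ℓ • (ι ℂ 7 * ι ℂ 1))
  | link₅ : ALinkRel q q' ℓ (ι ℂ 2 * ι ℂ 4) (ℓ • (ι ℂ 4 * ι ℂ 2))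
  | link₆ : ALinkRel q q' ℓ (ι ℂ 7 * ι ℂ 2) (ℓ • (ι ℂ 2 * ι ℂ 7))
  | link₇ : ALinkRel q q' ℓ (ι ℂ 3 * ι ℂ 5) (ℓ • (ι ℂ 5 * ι ℂ 3))
  | link₈ : ALinkRel q q' ℓ (ι ℂ 6 * ι ℂ 3) (ℓ • (ι ℂ 3 * ι ℂ 6))
  | comm₁ : ALinkRel q q' ℓ (ι ℂ 0 * ι ℂ 4) (ι ℂ 4 * ι ℂ 0)
  | comm₂ : ALinkRel q q' ℓ (ι ℂ 0 * ι ℂ 7) (ι ℂ 7 * ι ℂ 0)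
  | comm₃ : ALinkRel q q' ℓ (ι ℂ 1 * ι ℂ 5) (ι ℂ 5 * ι ℂ 1)
  | comm₄ : ALinkRel q q' ℓ (ι ℂ 1 * ι ℂ 6) (ι ℂ 6 * ι ℂ 1)
  | comm₅ : ALinkRel q q' ℓ (ι ℂ 2 * ι ℂ 5) (ι ℂ 5 * ι ℂ 2)
  | comm₆ : ALinkRel q q' ℓ (ι ℂ 2 * ι ℂ 6) (ι ℂ 6 * ι ℂ 2)
  | comm₇ : ALinkRel q q' ℓ (ι ℂ 3 * ι ℂ 4) (ι ℂ 4 * ι ℂ 3)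
  | comm₈ : ALinkRel q q' ℓ (ι ℂ 3 * ι ℂ 7) (ι ℂ 7 * ι ℂ 3)
  | det : ALinkRel q q' ℓ (ι ℂ 0 * ι ℂ 3 - q⁻¹ • (ι ℂ 1 * ι ℂ 2)) 1
  | det' : ALinkRel q q' ℓ (ι ℂ 4 * ι ℂ 7 - q' • (ι ℂ 5 * ι ℂ 6)) 1

/-- The q-linked quantum group algebra `A_{q,q',ℓ}`. -/
abbrev ALink (q q' ℓ : ℂ) := RingQuot (ALinkRel q q' ℓ)

/-- The images of the eight generators. -/
def gen (q q' ℓ : ℂ) (i : Fin 8) : ALink q q' ℓ :=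
  RingQuot.mkAlgHom ℂ (ALinkRel q q' ℓ) (ι ℂ i)

/-- A star structure on a complex algebra: additive, conjugate-linear,
antimultiplicative, unital, involutive. -/
def IsStar {A : Type*} [Ring A] [Algebra ℂ A] (st : A → A) : Prop :=
  (∀ x y : A, st (x + y) = st x + st y) ∧
  (∀ (z : ℂ) (x : A), st (z • x) = (starRingEnd ℂ) z • st x) ∧
  (∀ x y : A, st (x * y) = st y * st x) ∧
  st 1 = 1 ∧
  (∀ x : A, st (st x) = x)

/-- The prescribed values of the Lorentzian star structure `★ₗ` on the generators:
`a^★ = d'`, `b^★ = −q' c'`, `c^★ = −q'⁻¹ b'`, `d^★ = a'`, `a'^★ = d`,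
`b'^★ = −q⁻¹ c`, `c'^★ = −q b`, `d'^★ = a`. -/
def StarVals (q q' ℓ : ℂ) (st : ALink q q' ℓ → ALink q q' ℓ) : Prop :=
  st (gen q q' ℓ 0) = gen q q' ℓ 7 ∧
  st (gen q q' ℓ 1) = (-q') • gen q q' ℓ 6 ∧
  st (gen q q' ℓ 2) = (-q'⁻¹) • gen q q' ℓ 5 ∧
  st (gen q q' ℓ 3) = gen q q' ℓ 4 ∧
  st (gen q q' ℓ 4) = gen q q' ℓ 3 ∧
  st (gen q q' ℓ 5) = (-q⁻¹) • gen q q' ℓ 2 ∧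
  st (gen q q' ℓ 6) = (-q) • gen q q' ℓ 1 ∧
  st (gen q q' ℓ 7) = gen q q' ℓ 0

/-- `Δ` is the matrix comultiplication on both sectors of `A_{q,q',ℓ}`. -/
def IsComul (q q' ℓ : ℂ)
    (Δ : ALink q q' ℓ →ₐ[ℂ] (ALink q q' ℓ ⊗[ℂ] ALink q q' ℓ)) : Prop :=
  let X : Fin 2 → Fin 2 → ALink q q' ℓ :=
    ![![gen q q' ℓ 0, gen q q' ℓ 1], ![gen q q' ℓ 2, gen q q' ℓ 3]]
  let Y : Fin 2 → Fin 2 → ALink q q' ℓ :=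
    ![![gen q q' ℓ 4, gen q q' ℓ 5], ![gen q q' ℓ 6, gen q q' ℓ 7]]
  (∀ i j : Fin 2, Δ (X i j) = ∑ k : Fin 2, X i k ⊗ₜ[ℂ] X k j) ∧
  (∀ i j : Fin 2, Δ (Y i j) = ∑ k : Fin 2, Y i k ⊗ₜ[ℂ] Y k j)

section Aux
open MulOpposite

variable (q q' ℓ : ℂ)

/-- Values of the star on generators. -/
def Vv : Fin 8 → ALink q q' ℓ
  | 0 => gen q q' ℓ 7
  | 1 => (-q') • gen q q' ℓ 6
  | 2 => (-q'⁻¹) • gen q q' ℓ 5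
  | 3 => gen q q' ℓ 4
  | 4 => gen q q' ℓ 3
  | 5 => (-q⁻¹) • gen q q' ℓ 2
  | 6 => (-q) • gen q q' ℓ 1
  | 7 => gen q q' ℓ 0

/-- Conjugate-linear ring hom from the free algebra, sending `ι i` to `Vv i`. -/
def Θ : FreeAlgebra ℂ (Fin 8) →+* ALink q q' ℓ :=
  letI : Algebra ℂ (ALink q q' ℓ) :=
    RingHom.toAlgebra' ((algebraMap ℂ (ALink q q' ℓ)).comp (starRingEnd ℂ))
      (fun z x => by simpa using (Algebra.commutes ((starRingEnd ℂ) z) x))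
  (FreeAlgebra.lift ℂ (Vv q q' ℓ)).toRingHom

lemma Θ_ι (i : Fin 8) : Θ q q' ℓ (ι ℂ i) = Vv q q' ℓ i := by
  letI : Algebra ℂ (ALink q q' ℓ) :=
    RingHom.toAlgebra' ((algebraMap ℂ (ALink q q' ℓ)).comp (starRingEnd ℂ))
      (fun z x => by simpa using (Algebra.commutes ((starRingEnd ℂ) z) x))
  exact FreeAlgebra.lift_ι_apply (Vv q q' ℓ) i

lemma Θ_alg (z : ℂ) :
    Θ q q' ℓ (algebraMap ℂ _ z) = algebraMap ℂ (ALink q q' ℓ) ((starRingEnd ℂ) z) := by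
  letI : Algebra ℂ (ALink q q' ℓ) :=
    RingHom.toAlgebra' ((algebraMap ℂ (ALink q q' ℓ)).comp (starRingEnd ℂ))
      (fun z x => by simpa using (Algebra.commutes ((starRingEnd ℂ) z) x))
  exact (FreeAlgebra.lift ℂ (Vv q q' ℓ)).commutes z

lemma star_smul'' (z : ℂ) (x : FreeAlgebra ℂ (Fin 8)) : star (z • x) = z • star x := by
  rw [Algebra.smul_def, star_mul, FreeAlgebra.star_algebraMap, ← Algebra.commutes,
    ← Algebra.smul_def]

lemma Θ_smul (z : ℂ) (x : FreeAlgebra ℂ (Fin 8)) :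
    Θ q q' ℓ (z • x) = (starRingEnd ℂ) z • Θ q q' ℓ x := by
  rw [Algebra.smul_def, map_mul, Θ_alg, ← Algebra.smul_def]

/-- The star as a ring hom into the opposite algebra. -/
def Ψ : FreeAlgebra ℂ (Fin 8) →+* (ALink q q' ℓ)ᵐᵒᵖ :=
  (RingHom.op (Θ q q' ℓ)).comp
    (starRingEquiv : FreeAlgebra ℂ (Fin 8) ≃+* (FreeAlgebra ℂ (Fin 8))ᵐᵒᵖ).toRingHom

lemma Ψ_apply (x : FreeAlgebra ℂ (Fin 8)) : Ψ q q' ℓ x = op (Θ q q' ℓ (star x)) := rfl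

end Aux
section Rels

variable (q q' ℓ : ℂ)

lemma relQ {a b : FreeAlgebra ℂ (Fin 8)} (h : ALinkRel q q' ℓ a b) :
    RingQuot.mkAlgHom ℂ (ALinkRel q q' ℓ) a = RingQuot.mkAlgHom ℂ (ALinkRel q q' ℓ) b :=
  RingQuot.mkAlgHom_rel ℂ h

lemma Rab : gen q q' ℓ 0 * gen q q' ℓ 1 = q⁻¹ • (gen q q' ℓ 1 * gen q q' ℓ 0) := by
  simpa [gen, map_mul, map_smul] using relQ q q' ℓ ALinkRel.ab
lemma Rac : gen q q' ℓ 0 * gen q q' ℓ 2 = q⁻¹ • (gen q q' ℓ 2 * gen q q' ℓ 0) := by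
  simpa [gen, map_mul, map_smul] using relQ q q' ℓ ALinkRel.ac
lemma Rbd : gen q q' ℓ 1 * gen q q' ℓ 3 = q⁻¹ • (gen q q' ℓ 3 * gen q q' ℓ 1) := by
  simpa [gen, map_mul, map_smul] using relQ q q' ℓ ALinkRel.bd
lemma Rcd : gen q q' ℓ 2 * gen q q' ℓ 3 = q⁻¹ • (gen q q' ℓ 3 * gen q q' ℓ 2) := by
  simpa [gen, map_mul, map_smul] using relQ q q' ℓ ALinkRel.cd
lemma Rbc : gen q q' ℓ 1 * gen q q' ℓ 2 = gen q q' ℓ 2 * gen q q' ℓ 1 := by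
  simpa [gen, map_mul] using relQ q q' ℓ ALinkRel.bc
lemma Rad : gen q q' ℓ 0 * gen q q' ℓ 3 - gen q q' ℓ 3 * gen q q' ℓ 0
    = (q⁻¹ - q) • (gen q q' ℓ 1 * gen q q' ℓ 2) := by
  simpa [gen, map_mul, map_smul, map_sub] using relQ q q' ℓ ALinkRel.ad
lemma Rab' : gen q q' ℓ 4 * gen q q' ℓ 5 = q' • (gen q q' ℓ 5 * gen q q' ℓ 4) := by
  simpa [gen, map_mul, map_smul] using relQ q q' ℓ ALinkRel.ab'
lemma Rac' : gen q q' ℓ 4 * gen q q' ℓ 6 = q' • (gen q q' ℓ 6 * gen q q' ℓ 4) := by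
  simpa [gen, map_mul, map_smul] using relQ q q' ℓ ALinkRel.ac'
lemma Rbd' : gen q q' ℓ 5 * gen q q' ℓ 7 = q' • (gen q q' ℓ 7 * gen q q' ℓ 5) := by
  simpa [gen, map_mul, map_smul] using relQ q q' ℓ ALinkRel.bd'
lemma Rcd' : gen q q' ℓ 6 * gen q q' ℓ 7 = q' • (gen q q' ℓ 7 * gen q q' ℓ 6) := by
  simpa [gen, map_mul, map_smul] using relQ q q' ℓ ALinkRel.cd'
lemma Rbc' : gen q q' ℓ 5 * gen q q' ℓ 6 = gen q q' ℓ 6 * gen q q' ℓ 5 := by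
  simpa [gen, map_mul] using relQ q q' ℓ ALinkRel.bc'
lemma Rad' : gen q q' ℓ 4 * gen q q' ℓ 7 - gen q q' ℓ 7 * gen q q' ℓ 4
    = (q' - q'⁻¹) • (gen q q' ℓ 5 * gen q q' ℓ 6) := by
  simpa [gen, map_mul, map_smul, map_sub] using relQ q q' ℓ ALinkRel.ad'
lemma Rl1 : gen q q' ℓ 5 * gen q q' ℓ 0 = ℓ • (gen q q' ℓ 0 * gen q q' ℓ 5) := by
  simpa [gen, map_mul, map_smul] using relQ q q' ℓ ALinkRel.link₁
lemma Rl2 : gen q q' ℓ 0 * gen q q' ℓ 6 = ℓ • (gen q q' ℓ 6 * gen q q' ℓ 0) := by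
  simpa [gen, map_mul, map_smul] using relQ q q' ℓ ALinkRel.link₂
lemma Rl3 : gen q q' ℓ 4 * gen q q' ℓ 1 = ℓ • (gen q q' ℓ 1 * gen q q' ℓ 4) := by
  simpa [gen, map_mul, map_smul] using relQ q q' ℓ ALinkRel.link₃
lemma Rl4 : gen q q' ℓ 1 * gen q q' ℓ 7 = ℓ • (gen q q' ℓ 7 * gen q q' ℓ 1) := by
  simpa [gen, map_mul, map_smul] using relQ q q' ℓ ALinkRel.link₄
lemma Rl5 : gen q q' ℓ 2 * gen q q' ℓ 4 = ℓ • (gen q q' ℓ 4 * gen q q' ℓ 2) := by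
  simpa [gen, map_mul, map_smul] using relQ q q' ℓ ALinkRel.link₅
lemma Rl6 : gen q q' ℓ 7 * gen q q' ℓ 2 = ℓ • (gen q q' ℓ 2 * gen q q' ℓ 7) := by
  simpa [gen, map_mul, map_smul] using relQ q q' ℓ ALinkRel.link₆
lemma Rl7 : gen q q' ℓ 3 * gen q q' ℓ 5 = ℓ • (gen q q' ℓ 5 * gen q q' ℓ 3) := by
  simpa [gen, map_mul, map_smul] using relQ q q' ℓ ALinkRel.link₇
lemma Rl8 : gen q q' ℓ 6 * gen q q' ℓ 3 = ℓ • (gen q q' ℓ 3 * gen q q' ℓ 6) := by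
  simpa [gen, map_mul, map_smul] using relQ q q' ℓ ALinkRel.link₈
lemma Rc1 : gen q q' ℓ 0 * gen q q' ℓ 4 = gen q q' ℓ 4 * gen q q' ℓ 0 := by
  simpa [gen, map_mul] using relQ q q' ℓ ALinkRel.comm₁
lemma Rc2 : gen q q' ℓ 0 * gen q q' ℓ 7 = gen q q' ℓ 7 * gen q q' ℓ 0 := by
  simpa [gen, map_mul] using relQ q q' ℓ ALinkRel.comm₂
lemma Rc3 : gen q q' ℓ 1 * gen q q' ℓ 5 = gen q q' ℓ 5 * gen q q' ℓ 1 := by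
  simpa [gen, map_mul] using relQ q q' ℓ ALinkRel.comm₃
lemma Rc4 : gen q q' ℓ 1 * gen q q' ℓ 6 = gen q q' ℓ 6 * gen q q' ℓ 1 := by
  simpa [gen, map_mul] using relQ q q' ℓ ALinkRel.comm₄
lemma Rc5 : gen q q' ℓ 2 * gen q q' ℓ 5 = gen q q' ℓ 5 * gen q q' ℓ 2 := by
  simpa [gen, map_mul] using relQ q q' ℓ ALinkRel.comm₅
lemma Rc6 : gen q q' ℓ 2 * gen q q' ℓ 6 = gen q q' ℓ 6 * gen q q' ℓ 2 := by
  simpa [gen, map_mul] using relQ q q' ℓ ALinkRel.comm₆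
lemma Rc7 : gen q q' ℓ 3 * gen q q' ℓ 4 = gen q q' ℓ 4 * gen q q' ℓ 3 := by
  simpa [gen, map_mul] using relQ q q' ℓ ALinkRel.comm₇
lemma Rc8 : gen q q' ℓ 3 * gen q q' ℓ 7 = gen q q' ℓ 7 * gen q q' ℓ 3 := by
  simpa [gen, map_mul] using relQ q q' ℓ ALinkRel.comm₈
lemma Rdet : gen q q' ℓ 0 * gen q q' ℓ 3 - q⁻¹ • (gen q q' ℓ 1 * gen q q' ℓ 2) = 1 := by
  simpa [gen, map_mul, map_smul, map_sub] using relQ q q' ℓ ALinkRel.det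
lemma Rdet' : gen q q' ℓ 4 * gen q q' ℓ 7 - q' • (gen q q' ℓ 5 * gen q q' ℓ 6) = 1 := by
  simpa [gen, map_mul, map_smul, map_sub] using relQ q q' ℓ ALinkRel.det'

end Rels
section Compat
open MulOpposite

variable (q q' ℓ : ℂ)

lemma Psi_rel (hq : q ≠ 0) (hq' : q' ≠ 0) (hqc : (starRingEnd ℂ) q = q'⁻¹)
    (hℓc : (starRingEnd ℂ) ℓ = ℓ) :
    ∀ ⦃a b⦄, ALinkRel q q' ℓ a b → Ψ q q' ℓ a = Ψ q q' ℓ b := by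
  have hq'c : (starRingEnd ℂ) q' = q⁻¹ := by
    have h := congrArg (starRingEnd ℂ) hqc
    rw [Complex.conj_conj, map_inv₀] at h
    rw [h, inv_inv]
  intro a b h
  cases h <;>
    simp only [Ψ_apply, star_sub, star_mul, star_one, star_smul'', FreeAlgebra.star_ι,
      map_sub, map_mul, map_one, Θ_smul, Θ_ι, MulOpposite.op_inj, Vv, map_inv₀, hqc, hq'c,
      hℓc, inv_inv, ← MulOpposite.op_mul, ← MulOpposite.op_sub, ← MulOpposite.op_one,
      smul_mul_assoc, mul_smul_comm, smul_smul, MulOpposite.op_inj]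
  case ab => rw [Rcd']; module
  case ac => rw [Rbd']; module
  case bd => rw [Rac']; module
  case cd => rw [Rab']; module
  case bc => rw [Rbc']; module
  case ad => rw [Rad']; match_scalars; field_simp
  case ab' => rw [Rcd]; module
  case ac' => rw [Rbd]; module
  case bd' => rw [Rac]; module
  case cd' => rw [Rab]; module
  case bc' => rw [Rbc]; module
  case ad' => rw [Rad]; match_scalars; field_simp
  case link₁ => rw [Rl6]; module
  case link₂ => rw [Rl4]; module
  case link₃ => rw [Rl8]; module
  case link₄ => rw [Rl2]; module
  case link₅ => rw [Rl7]; module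
  case link₆ => rw [Rl1]; module
  case link₇ => rw [Rl5]; module
  case link₈ => rw [Rl3]; module
  case comm₁ => rw [Rc8 q q' ℓ]
  case comm₂ => rw [Rc2 q q' ℓ]
  case comm₇ => rw [Rc7 q q' ℓ]
  case comm₈ => rw [Rc1 q q' ℓ]
  case comm₃ => rw [Rc6]; module
  case comm₄ => rw [Rc4]; module
  case comm₅ => rw [Rc5]; module
  case comm₆ => rw [Rc3]; module
  case det => rw [← Rdet' q q' ℓ]; match_scalars <;> field_simp
  case det' => rw [← Rdet q q' ℓ]; match_scalars <;> field_simp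

end Compat
section StarMap
open MulOpposite

variable (q q' ℓ : ℂ)

/-- The canonical quotient map. -/
def mkA : FreeAlgebra ℂ (Fin 8) →ₐ[ℂ] ALink q q' ℓ := RingQuot.mkAlgHom ℂ (ALinkRel q q' ℓ)

lemma mkA_surj : Function.Surjective (mkA q q' ℓ) := RingQuot.mkAlgHom_surjective ℂ _

lemma gen_eq (i : Fin 8) : gen q q' ℓ i = mkA q q' ℓ (ι ℂ i) := rfl

variable (hq : q ≠ 0) (hq' : q' ≠ 0) (hqc : (starRingEnd ℂ) q = q'⁻¹)
  (hℓc : (starRingEnd ℂ) ℓ = ℓ)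

/-- The Lorentzian star. -/
def stL : ALink q q' ℓ → ALink q q' ℓ := fun x =>
  (RingQuot.lift ⟨Ψ q q' ℓ, fun _ _ h => Psi_rel q q' ℓ hq hq' hqc hℓc h⟩ x).unop

lemma stL_mk (u : FreeAlgebra ℂ (Fin 8)) :
    stL q q' ℓ hq hq' hqc hℓc (mkA q q' ℓ u) = Θ q q' ℓ (star u) := by
  have h1 : mkA q q' ℓ u = RingQuot.mkRingHom (ALinkRel q q' ℓ) u :=
    DFunLike.congr_fun (RingQuot.mkAlgHom_coe ℂ (ALinkRel q q' ℓ)) u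
  rw [stL, h1, RingQuot.lift_mkRingHom_apply, Ψ_apply, unop_op]

lemma stL_add (x y : ALink q q' ℓ) :
    stL q q' ℓ hq hq' hqc hℓc (x + y)
      = stL q q' ℓ hq hq' hqc hℓc x + stL q q' ℓ hq hq' hqc hℓc y := by
  simp [stL, map_add]

lemma stL_mul (x y : ALink q q' ℓ) :
    stL q q' ℓ hq hq' hqc hℓc (x * y)
      = stL q q' ℓ hq hq' hqc hℓc y * stL q q' ℓ hq hq' hqc hℓc x := by
  simp [stL, map_mul]

lemma stL_one : stL q q' ℓ hq hq' hqc hℓc 1 = 1 := by simp [stL]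

lemma stL_smul (z : ℂ) (x : ALink q q' ℓ) :
    stL q q' ℓ hq hq' hqc hℓc (z • x)
      = (starRingEnd ℂ) z • stL q q' ℓ hq hq' hqc hℓc x := by
  obtain ⟨u, rfl⟩ := mkA_surj q q' ℓ x
  rw [← map_smul (mkA q q' ℓ), stL_mk, stL_mk, star_smul'', Θ_smul]

lemma stL_gen (i : Fin 8) :
    stL q q' ℓ hq hq' hqc hℓc (gen q q' ℓ i) = Vv q q' ℓ i := by
  rw [gen_eq, stL_mk, FreeAlgebra.star_ι, Θ_ι]

lemma stL_starVals : StarVals q q' ℓ (stL q q' ℓ hq hq' hqc hℓc) := by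
  refine ⟨?_, ?_, ?_, ?_, ?_, ?_, ?_, ?_⟩ <;> rw [stL_gen] <;> rfl

lemma stL_invol (x : ALink q q' ℓ) :
    stL q q' ℓ hq hq' hqc hℓc (stL q q' ℓ hq hq' hqc hℓc x) = x := by
  have hq'c : (starRingEnd ℂ) q' = q⁻¹ := by
    have h := congrArg (starRingEnd ℂ) hqc
    rw [Complex.conj_conj, map_inv₀] at h
    rw [h, inv_inv]
  obtain ⟨u, rfl⟩ := mkA_surj q q' ℓ x
  induction u using FreeAlgebra.induction with
  | grade0 r =>
    rw [AlgHom.commutes, Algebra.algebraMap_eq_smul_one, stL_smul, stL_one, stL_smul, stL_one,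
      Complex.conj_conj]
  | grade1 i =>
    rw [← gen_eq, stL_gen]
    fin_cases i
    · show stL q q' ℓ hq hq' hqc hℓc (Vv q q' ℓ 0) = gen q q' ℓ 0
      simp [Vv, stL_smul, stL_gen, smul_smul, map_neg, map_inv₀, hqc, hq'c, inv_inv,
        mul_inv_cancel₀ hq, inv_mul_cancel₀ hq, mul_inv_cancel₀ hq', inv_mul_cancel₀ hq']
    · show stL q q' ℓ hq hq' hqc hℓc (Vv q q' ℓ 1) = gen q q' ℓ 1
      simp [Vv, stL_smul, stL_gen, smul_smul, map_neg, map_inv₀, hqc, hq'c, inv_inv,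
        mul_inv_cancel₀ hq, inv_mul_cancel₀ hq, mul_inv_cancel₀ hq', inv_mul_cancel₀ hq']
    · show stL q q' ℓ hq hq' hqc hℓc (Vv q q' ℓ 2) = gen q q' ℓ 2
      simp [Vv, stL_smul, stL_gen, smul_smul, map_neg, map_inv₀, hqc, hq'c, inv_inv,
        mul_inv_cancel₀ hq, inv_mul_cancel₀ hq, mul_inv_cancel₀ hq', inv_mul_cancel₀ hq']
    · show stL q q' ℓ hq hq' hqc hℓc (Vv q q' ℓ 3) = gen q q' ℓ 3
      simp [Vv, stL_smul, stL_gen, smul_smul, map_neg, map_inv₀, hqc, hq'c, inv_inv,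
        mul_inv_cancel₀ hq, inv_mul_cancel₀ hq, mul_inv_cancel₀ hq', inv_mul_cancel₀ hq']
    · show stL q q' ℓ hq hq' hqc hℓc (Vv q q' ℓ 4) = gen q q' ℓ 4
      simp [Vv, stL_smul, stL_gen, smul_smul, map_neg, map_inv₀, hqc, hq'c, inv_inv,
        mul_inv_cancel₀ hq, inv_mul_cancel₀ hq, mul_inv_cancel₀ hq', inv_mul_cancel₀ hq']
    · show stL q q' ℓ hq hq' hqc hℓc (Vv q q' ℓ 5) = gen q q' ℓ 5
      simp [Vv, stL_smul, stL_gen, smul_smul, map_neg, map_inv₀, hqc, hq'c, inv_inv,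
        mul_inv_cancel₀ hq, inv_mul_cancel₀ hq, mul_inv_cancel₀ hq', inv_mul_cancel₀ hq']
    · show stL q q' ℓ hq hq' hqc hℓc (Vv q q' ℓ 6) = gen q q' ℓ 6
      simp [Vv, stL_smul, stL_gen, smul_smul, map_neg, map_inv₀, hqc, hq'c, inv_inv,
        mul_inv_cancel₀ hq, inv_mul_cancel₀ hq, mul_inv_cancel₀ hq', inv_mul_cancel₀ hq']
    · show stL q q' ℓ hq hq' hqc hℓc (Vv q q' ℓ 7) = gen q q' ℓ 7
      simp [Vv, stL_smul, stL_gen, smul_smul, map_neg, map_inv₀, hqc, hq'c, inv_inv,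
        mul_inv_cancel₀ hq, inv_mul_cancel₀ hq, mul_inv_cancel₀ hq', inv_mul_cancel₀ hq']
  | mul a b ha hb => rw [map_mul, stL_mul, stL_mul, ha, hb]
  | add a b ha hb => rw [map_add, stL_add, stL_add, ha, hb]

lemma stL_isStar : IsStar (stL q q' ℓ hq hq' hqc hℓc) :=
  ⟨stL_add q q' ℓ hq hq' hqc hℓc, stL_smul q q' ℓ hq hq' hqc hℓc,
    stL_mul q q' ℓ hq hq' hqc hℓc, stL_one q q' ℓ hq hq' hqc hℓc,
    stL_invol q q' ℓ hq hq' hqc hℓc⟩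

/-- Uniqueness of a star structure with given generator values. -/
lemma star_unique (st₁ st₂ : ALink q q' ℓ → ALink q q' ℓ)
    (h₁ : IsStar st₁ ∧ StarVals q q' ℓ st₁) (h₂ : IsStar st₂ ∧ StarVals q q' ℓ st₂) :
    st₁ = st₂ := by
  obtain ⟨⟨add₁, smul₁, mul₁, one₁, -⟩, v₁⟩ := h₁
  obtain ⟨⟨add₂, smul₂, mul₂, one₂, -⟩, v₂⟩ := h₂
  funext x
  obtain ⟨u, rfl⟩ := mkA_surj q q' ℓ x
  induction u using FreeAlgebra.induction with
  | grade0 r =>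
    rw [AlgHom.commutes, Algebra.algebraMap_eq_smul_one, smul₁, smul₂, one₁, one₂]
  | grade1 i =>
    rw [← gen_eq]
    fin_cases i
    · exact v₁.1.trans v₂.1.symm
    · exact v₁.2.1.trans v₂.2.1.symm
    · exact v₁.2.2.1.trans v₂.2.2.1.symm
    · exact v₁.2.2.2.1.trans v₂.2.2.2.1.symm
    · exact v₁.2.2.2.2.1.trans v₂.2.2.2.2.1.symm
    · exact v₁.2.2.2.2.2.1.trans v₂.2.2.2.2.2.1.symm
    · exact v₁.2.2.2.2.2.2.1.trans v₂.2.2.2.2.2.2.1.symm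
    · exact v₁.2.2.2.2.2.2.2.trans v₂.2.2.2.2.2.2.2.symm
  | mul a b ha hb => rw [map_mul, mul₁, mul₂, ha, hb]
  | add a b ha hb => rw [map_add, add₁, add₂, ha, hb]

end StarMap
section Hopf
open MulOpposite

variable (q q' ℓ : ℂ)

set_option maxHeartbeats 1600000 in
lemma hopf_aux (hq : q ≠ 0) (hq' : q' ≠ 0)
    (st : ALink q q' ℓ → ALink q q' ℓ) (hst : IsStar st ∧ StarVals q q' ℓ st)
    (Δ : ALink q q' ℓ →ₐ[ℂ] (ALink q q' ℓ ⊗[ℂ] ALink q q' ℓ)) (hΔ : IsComul q q' ℓ Δ) :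
    ∃ T : (ALink q q' ℓ ⊗[ℂ] ALink q q' ℓ) → (ALink q q' ℓ ⊗[ℂ] ALink q q' ℓ),
      (∀ u v, T (u + v) = T u + T v) ∧
      (∀ x y : ALink q q' ℓ, T (x ⊗ₜ[ℂ] y) = st x ⊗ₜ[ℂ] st y) ∧
      (∀ x : ALink q q' ℓ, Δ (st x) = T (Δ x)) := by
  obtain ⟨⟨sadd, ssmul, smul', sone, -⟩, sv⟩ := hst
  obtain ⟨hX, hY⟩ := hΔ
  have st0 : st 0 = 0 := by simpa using ssmul 0 0
  -- the tensor square of `st` as an additive map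
  let T0 : (ALink q q' ℓ ⊗[ℂ] ALink q q' ℓ) →+ (ALink q q' ℓ ⊗[ℂ] ALink q q' ℓ) :=
    TensorProduct.liftAddHom
      { toFun := fun x =>
          { toFun := fun y => st x ⊗ₜ[ℂ] st y
            map_zero' := by simp [st0]
            map_add' := fun y₁ y₂ => by simp [sadd, TensorProduct.tmul_add] }
        map_zero' := by ext y; simp [st0]
        map_add' := fun x₁ x₂ => by ext y; simp [sadd, TensorProduct.add_tmul] }
      (fun r x y => by
        simp only [AddMonoidHom.coe_mk, ZeroHom.coe_mk, ssmul, TensorProduct.smul_tmul',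
          TensorProduct.tmul_smul])
  have hTt : ∀ x y : ALink q q' ℓ, T0 (x ⊗ₜ[ℂ] y) = st x ⊗ₜ[ℂ] st y := fun x y =>
    TensorProduct.liftAddHom_tmul _ _ x y
  have hTmul : ∀ u v, T0 (u * v) = T0 v * T0 u := by
    intro u v
    induction u using TensorProduct.induction_on with
    | zero => simp
    | tmul x y =>
      induction v using TensorProduct.induction_on with
      | zero => simp
      | tmul x' y' => simp [Algebra.TensorProduct.tmul_mul_tmul, hTt, smul']
      | add v₁ v₂ h₁ h₂ => simp only [mul_add, add_mul, map_add, h₁, h₂]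
    | add u₁ u₂ h₁ h₂ => simp only [mul_add, add_mul, map_add, h₁, h₂]
  have hTsmul : ∀ (z : ℂ) u, T0 (z • u) = (starRingEnd ℂ) z • T0 u := by
    intro z u
    induction u using TensorProduct.induction_on with
    | zero => simp
    | tmul x y => rw [TensorProduct.smul_tmul', hTt, hTt, ssmul, TensorProduct.smul_tmul']
    | add u₁ u₂ h₁ h₂ => rw [smul_add, map_add, h₁, h₂, map_add, smul_add]
  -- the comultiplication on the generators
  have hD0 : Δ (gen q q' ℓ 0)
      = gen q q' ℓ 0 ⊗ₜ[ℂ] gen q q' ℓ 0 + gen q q' ℓ 1 ⊗ₜ[ℂ] gen q q' ℓ 2 := by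
    simpa [Fin.sum_univ_two] using hX 0 0
  have hD1 : Δ (gen q q' ℓ 1)
      = gen q q' ℓ 0 ⊗ₜ[ℂ] gen q q' ℓ 1 + gen q q' ℓ 1 ⊗ₜ[ℂ] gen q q' ℓ 3 := by
    simpa [Fin.sum_univ_two] using hX 0 1
  have hD2 : Δ (gen q q' ℓ 2)
      = gen q q' ℓ 2 ⊗ₜ[ℂ] gen q q' ℓ 0 + gen q q' ℓ 3 ⊗ₜ[ℂ] gen q q' ℓ 2 := by
    simpa [Fin.sum_univ_two] using hX 1 0
  have hD3 : Δ (gen q q' ℓ 3)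
      = gen q q' ℓ 2 ⊗ₜ[ℂ] gen q q' ℓ 1 + gen q q' ℓ 3 ⊗ₜ[ℂ] gen q q' ℓ 3 := by
    simpa [Fin.sum_univ_two] using hX 1 1
  have hD4 : Δ (gen q q' ℓ 4)
      = gen q q' ℓ 4 ⊗ₜ[ℂ] gen q q' ℓ 4 + gen q q' ℓ 5 ⊗ₜ[ℂ] gen q q' ℓ 6 := by
    simpa [Fin.sum_univ_two] using hY 0 0
  have hD5 : Δ (gen q q' ℓ 5)
      = gen q q' ℓ 4 ⊗ₜ[ℂ] gen q q' ℓ 5 + gen q q' ℓ 5 ⊗ₜ[ℂ] gen q q' ℓ 7 := by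
    simpa [Fin.sum_univ_two] using hY 0 1
  have hD6 : Δ (gen q q' ℓ 6)
      = gen q q' ℓ 6 ⊗ₜ[ℂ] gen q q' ℓ 4 + gen q q' ℓ 7 ⊗ₜ[ℂ] gen q q' ℓ 6 := by
    simpa [Fin.sum_univ_two] using hY 1 0
  have hD7 : Δ (gen q q' ℓ 7)
      = gen q q' ℓ 6 ⊗ₜ[ℂ] gen q q' ℓ 5 + gen q q' ℓ 7 ⊗ₜ[ℂ] gen q q' ℓ 7 := by
    simpa [Fin.sum_univ_two] using hY 1 1
  refine ⟨⇑T0, fun u v => map_add T0 u v, hTt, ?_⟩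
  intro x
  obtain ⟨u, rfl⟩ := mkA_surj q q' ℓ x
  induction u using FreeAlgebra.induction with
  | grade0 r =>
    rw [AlgHom.commutes, Algebra.algebraMap_eq_smul_one, ssmul, sone, map_smul, map_one,
      map_smul, hTsmul, map_one, Algebra.TensorProduct.one_def, hTt, sone]
  | grade1 i =>
    rw [← gen_eq]
    fin_cases i
    · show Δ (st (gen q q' ℓ 0)) = T0 (Δ (gen q q' ℓ 0))
      rw [sv.1, hD7, hD0, map_add, hTt, hTt, sv.1, sv.2.1, sv.2.2.1]
      simp only [TensorProduct.smul_tmul', TensorProduct.tmul_smul, smul_smul, smul_add,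
        neg_mul_neg, mul_inv_cancel₀ hq, inv_mul_cancel₀ hq, mul_inv_cancel₀ hq',
        inv_mul_cancel₀ hq', one_smul]
      first | rfl | exact add_comm _ _ | abel
    · show Δ (st (gen q q' ℓ 1)) = T0 (Δ (gen q q' ℓ 1))
      rw [sv.2.1, map_smul, hD6, hD1, map_add, hTt, hTt, sv.1, sv.2.1, sv.2.2.2.1]
      simp only [TensorProduct.smul_tmul', TensorProduct.tmul_smul, smul_smul, smul_add,
        neg_mul_neg, mul_inv_cancel₀ hq, inv_mul_cancel₀ hq, mul_inv_cancel₀ hq',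
        inv_mul_cancel₀ hq', one_smul]
      first | rfl | exact add_comm _ _ | abel
    · show Δ (st (gen q q' ℓ 2)) = T0 (Δ (gen q q' ℓ 2))
      rw [sv.2.2.1, map_smul, hD5, hD2, map_add, hTt, hTt, sv.1, sv.2.2.1, sv.2.2.2.1]
      simp only [TensorProduct.smul_tmul', TensorProduct.tmul_smul, smul_smul, smul_add,
        neg_mul_neg, mul_inv_cancel₀ hq, inv_mul_cancel₀ hq, mul_inv_cancel₀ hq',
        inv_mul_cancel₀ hq', one_smul]
      first | rfl | exact add_comm _ _ | abel
    · show Δ (st (gen q q' ℓ 3)) = T0 (Δ (gen q q' ℓ 3))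
      rw [sv.2.2.2.1, hD4, hD3, map_add, hTt, hTt, sv.2.1, sv.2.2.1, sv.2.2.2.1]
      simp only [TensorProduct.smul_tmul', TensorProduct.tmul_smul, smul_smul, smul_add,
        neg_mul_neg, mul_inv_cancel₀ hq, inv_mul_cancel₀ hq, mul_inv_cancel₀ hq',
        inv_mul_cancel₀ hq', one_smul]
      first | rfl | exact add_comm _ _ | abel
    · show Δ (st (gen q q' ℓ 4)) = T0 (Δ (gen q q' ℓ 4))
      rw [sv.2.2.2.2.1, hD3, hD4, map_add, hTt, hTt, sv.2.2.2.2.1, sv.2.2.2.2.2.1,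
        sv.2.2.2.2.2.2.1]
      simp only [TensorProduct.smul_tmul', TensorProduct.tmul_smul, smul_smul, smul_add,
        neg_mul_neg, mul_inv_cancel₀ hq, inv_mul_cancel₀ hq, mul_inv_cancel₀ hq',
        inv_mul_cancel₀ hq', one_smul]
      first | rfl | exact add_comm _ _ | abel
    · show Δ (st (gen q q' ℓ 5)) = T0 (Δ (gen q q' ℓ 5))
      rw [sv.2.2.2.2.2.1, map_smul, hD2, hD5, map_add, hTt, hTt, sv.2.2.2.2.1,
        sv.2.2.2.2.2.1, sv.2.2.2.2.2.2.2]
      simp only [TensorProduct.smul_tmul', TensorProduct.tmul_smul, smul_smul, smul_add,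
        neg_mul_neg, mul_inv_cancel₀ hq, inv_mul_cancel₀ hq, mul_inv_cancel₀ hq',
        inv_mul_cancel₀ hq', one_smul]
      first | rfl | exact add_comm _ _ | abel
    · show Δ (st (gen q q' ℓ 6)) = T0 (Δ (gen q q' ℓ 6))
      rw [sv.2.2.2.2.2.2.1, map_smul, hD1, hD6, map_add, hTt, hTt, sv.2.2.2.2.1,
        sv.2.2.2.2.2.2.1, sv.2.2.2.2.2.2.2]
      simp only [TensorProduct.smul_tmul', TensorProduct.tmul_smul, smul_smul, smul_add,
        neg_mul_neg, mul_inv_cancel₀ hq, inv_mul_cancel₀ hq, mul_inv_cancel₀ hq',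
        inv_mul_cancel₀ hq', one_smul]
      first | rfl | exact add_comm _ _ | abel
    · show Δ (st (gen q q' ℓ 7)) = T0 (Δ (gen q q' ℓ 7))
      rw [sv.2.2.2.2.2.2.2, hD0, hD7, map_add, hTt, hTt, sv.2.2.2.2.2.1,
        sv.2.2.2.2.2.2.1, sv.2.2.2.2.2.2.2]
      simp only [TensorProduct.smul_tmul', TensorProduct.tmul_smul, smul_smul, smul_add,
        neg_mul_neg, mul_inv_cancel₀ hq, inv_mul_cancel₀ hq, mul_inv_cancel₀ hq',
        inv_mul_cancel₀ hq', one_smul]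
      first | rfl | exact add_comm _ _ | abel
  | mul a b ha hb =>
    rw [map_mul (mkA q q' ℓ) a b, smul', map_mul Δ, map_mul Δ, hTmul, ha, hb]
  | add a b ha hb =>
    rw [map_add (mkA q q' ℓ) a b, sadd, map_add Δ, map_add Δ, map_add T0, ha, hb]

end Hopf
/-- For `q̄ = q'⁻¹` and `ℓ̄ = ℓ` there is a unique star structure `★ₗ` on the
q-linked quantum group algebra `A_{q,q',ℓ}` with the prescribed Lorentzian values on
the generators, and it is a Hopf star structure: `Δ(x^★) = (★ ⊗ ★)(Δ(x))` for all
`x`.  (The fixed-point real form is the deformed real Lorentz group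
`SO_{q,q'}^ℓ(3,1)`.) -/
theorem lorentz_star_exists_unique (q q' ℓ : ℂ) (hq : q ≠ 0) (hq' : q' ≠ 0)
    (hℓ : ℓ ≠ 0) (hqc : (starRingEnd ℂ) q = q'⁻¹) (hℓc : (starRingEnd ℂ) ℓ = ℓ) :
    (∃! st : ALink q q' ℓ → ALink q q' ℓ, IsStar st ∧ StarVals q q' ℓ st) ∧
    (∀ st : ALink q q' ℓ → ALink q q' ℓ, IsStar st ∧ StarVals q q' ℓ st →
      ∀ Δ : ALink q q' ℓ →ₐ[ℂ] (ALink q q' ℓ ⊗[ℂ] ALink q q' ℓ), IsComul q q' ℓ Δ →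
        ∃ T : (ALink q q' ℓ ⊗[ℂ] ALink q q' ℓ) → (ALink q q' ℓ ⊗[ℂ] ALink q q' ℓ),
          (∀ u v, T (u + v) = T u + T v) ∧
          (∀ x y : ALink q q' ℓ, T (x ⊗ₜ[ℂ] y) = st x ⊗ₜ[ℂ] st y) ∧
          (∀ x : ALink q q' ℓ, Δ (st x) = T (Δ x))) := by
  have hst := stL_isStar q q' ℓ hq hq' hqc hℓc
  have hsv := stL_starVals q q' ℓ hq hq' hqc hℓc
  refine ⟨⟨stL q q' ℓ hq hq' hqc hℓc, ⟨hst, hsv⟩, ?_⟩, ?_⟩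
  · intro y hy
    exact star_unique q q' ℓ y (stL q q' ℓ hq hq' hqc hℓc) hy ⟨hst, hsv⟩
  · intro st hst' Δ hΔ
    exact hopf_aux q q' ℓ hq hq' st hst' Δ hΔ
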